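/- arXiv:1909.02553 — 3 statements merged into one kernel-verified Lean document; each statement's English description precedes it below -/
import Mathlib

section
/- Let τ : X → ℝ be 2L₁-Lipschitz on a compact support X satisfying the strong density condition with μ_min > 0 and such that the regions {x : τ(x) ≥ 0} and {x : τ(x) ≤ 0} (intersected with X) are (c₀,r₀)-regular when non-empty, and suppose the margin condition ℙ(0 < |τ(X)| ≤ t) ≤ γ t^α holds with α > d. Then there exists τ_min > 0, depending only on L₁, γ, α, d, c₀, r₀, μ_min, such that for every x ∈ X, either τ(x) = 0 or |τ(x)| ≥ τ_min. -/
open MeasureTheory Metric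

/-- If `τ` is `2L₁`-Lipschitz on a compact support `Xs ⊆ [0,1]^d` on which the covariate
distribution `P` has density bounded below by `μ_min > 0`, the decision regions
`{x ∈ Xs : τ(x) ≥ 0}` and `{x ∈ Xs : τ(x) ≤ 0}` are `(c₀,r₀)`-regular when non-empty,
and the margin condition `ℙ(0 < |τ(X)| ≤ t) ≤ γ t^α` holds with `α > d`, then there
exists `τ_min > 0` such that for every `x ∈ Xs`, either `τ(x) = 0` or `|τ(x)| ≥ τ_min`. -/
theorem margin_sharp (d : ℕ) (hd : 0 < d)
    (P : Measure (EuclideanSpace ℝ (Fin d))) [IsProbabilityMeasure P]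
    (Xs : Set (EuclideanSpace ℝ (Fin d))) (τ : EuclideanSpace ℝ (Fin d) → ℝ)
    (L₁ γ α μmin c₀ r₀ : ℝ)
    (hXscomp : IsCompact Xs)
    (hXscube : Xs ⊆ {x | ∀ i, x i ∈ Set.Icc (0 : ℝ) 1})
    (hL₁ : 0 < L₁)
    (hLip : ∀ x ∈ Xs, ∀ y ∈ Xs, |τ x - τ y| ≤ 2 * L₁ * ‖x - y‖)
    (hμmin : 0 < μmin)
    (hdens : ∀ A : Set (EuclideanSpace ℝ (Fin d)), MeasurableSet A →
      ENNReal.ofReal μmin * volume (A ∩ Xs) ≤ P A)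
    (hsupp : P Xs = 1)
    (hc₀ : 0 < c₀) (hc₀1 : c₀ ≤ 1) (hr₀ : 0 < r₀)
    (hreg : ∀ a : ℝ, a = 1 ∨ a = -1 →
      ({x ∈ Xs | 0 ≤ a * τ x}).Nonempty →
      ∀ x ∈ {x ∈ Xs | 0 ≤ a * τ x}, ∀ r : ℝ, 0 ≤ r → r ≤ r₀ →
        ENNReal.ofReal c₀ * volume (closedBall x r) ≤
          volume ({x ∈ Xs | 0 ≤ a * τ x} ∩ closedBall x r))
    (hγ : 0 < γ) (hα : (d : ℝ) < α)
    (hmargin : ∀ t : ℝ, 0 < t →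
      P {x | 0 < |τ x| ∧ |τ x| ≤ t} ≤ ENNReal.ofReal (γ * t ^ α)) :
    ∃ τmin : ℝ, 0 < τmin ∧ ∀ x ∈ Xs, τ x = 0 ∨ τmin ≤ |τ x| := by
  classical
  -- the volume of the unit ball
  set B : ENNReal := volume (ball (0 : EuclideanSpace ℝ (Fin d)) 1) with hBdef
  have hB0 : 0 < B := measure_ball_pos _ _ one_pos
  have hBtop : B < ⊤ := measure_ball_lt_top
  set Bv : ℝ := B.toReal with hBvdef
  have hBv : 0 < Bv := ENNReal.toReal_pos hB0.ne' hBtop.ne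
  -- constants
  set C : ℝ := μmin * c₀ * Bv / (4 * L₁) ^ d with hCdef
  set D : ℝ := γ * (3 / 2 : ℝ) ^ α with hDdef
  have hC : 0 < C := by positivity
  have hD : 0 < D := by
    have : (0:ℝ) < (3/2:ℝ) ^ α := Real.rpow_pos_of_pos (by norm_num) _
    positivity
  set τ₂ : ℝ := (C / D) ^ (1 / (α - d)) with hτ₂def
  have hτ₂ : 0 < τ₂ := Real.rpow_pos_of_pos (by positivity) _
  refine ⟨min (4 * L₁ * r₀) τ₂, lt_min (by positivity) hτ₂, ?_⟩
  intro x hx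
  by_cases hτx : τ x = 0
  · exact Or.inl hτx
  right
  set s : ℝ := |τ x| with hsdef
  have hs : 0 < s := abs_pos.mpr hτx
  -- choose the sign
  set a : ℝ := if 0 < τ x then 1 else -1 with hadef
  have ha : a = 1 ∨ a = -1 := by
    by_cases h : 0 < τ x <;> simp [hadef, h]
  have haa : |a| = 1 := by rcases ha with h | h <;> simp [h]
  have haτ : a * τ x = s := by
    by_cases h : 0 < τ x
    · simp [hadef, h, hsdef, abs_of_pos h]
    · have h' : τ x < 0 := lt_of_le_of_ne (not_lt.mp h) hτx
      simp [hadef, h, hsdef, abs_of_neg h']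
  -- the radius
  set r : ℝ := min (s / (4 * L₁)) r₀ with hrdef
  have hr0 : 0 < r := lt_min (by positivity) hr₀
  have hrr₀ : r ≤ r₀ := min_le_right _ _
  have hr4 : 2 * L₁ * r ≤ s / 2 := by
    have h1 : r ≤ s / (4 * L₁) := min_le_left _ _
    calc 2 * L₁ * r ≤ 2 * L₁ * (s / (4 * L₁)) := by
          apply mul_le_mul_of_nonneg_left h1 (by positivity)
      _ = s / 2 := by field_simp; ring
  -- the decision region
  set Q : Set (EuclideanSpace ℝ (Fin d)) := {y ∈ Xs | 0 ≤ a * τ y} with hQdef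
  have hxQ : x ∈ Q := ⟨hx, by rw [haτ]; exact hs.le⟩
  -- Q is measurable
  have hτcont : ContinuousOn τ Xs := by
    have : LipschitzOnWith (Real.toNNReal (2 * L₁)) τ Xs := by
      rw [lipschitzOnWith_iff_dist_le_mul]
      intro u hu v hv
      calc dist (τ u) (τ v) = |τ u - τ v| := by rw [Real.dist_eq]
        _ ≤ 2 * L₁ * ‖u - v‖ := hLip u hu v hv
        _ = (Real.toNNReal (2 * L₁) : ℝ) * dist u v := by
            rw [Real.coe_toNNReal _ (by positivity), dist_eq_norm]
    exact this.continuousOn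
  have hQclosed : IsClosed Q := by
    have : Q = Xs ∩ (fun y => a * τ y) ⁻¹' Set.Ici 0 := by
      ext y; simp [hQdef, Set.mem_setOf_eq, and_comm]
    rw [this]
    exact ContinuousOn.preimage_isClosed_of_isClosed
      (continuousOn_const.mul hτcont) hXscomp.isClosed isClosed_Ici
  have hQmeas : MeasurableSet (Q ∩ closedBall x r) :=
    (hQclosed.measurableSet).inter measurableSet_closedBall
  -- subset of margin set
  have hsub : Q ∩ closedBall x r ⊆ {y | 0 < |τ y| ∧ |τ y| ≤ 3 / 2 * s} := by
    rintro y ⟨⟨hyXs, hyτ⟩, hyball⟩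
    have hdist : |τ y - τ x| ≤ s / 2 := by
      calc |τ y - τ x| ≤ 2 * L₁ * ‖y - x‖ := hLip y hyXs x hx
        _ ≤ 2 * L₁ * r := by
            apply mul_le_mul_of_nonneg_left _ (by positivity)
            rw [← dist_eq_norm]; exact hyball
        _ ≤ s / 2 := hr4
    have hay : |a * τ y - s| ≤ s / 2 := by
      have : |a * τ y - a * τ x| ≤ s / 2 := by
        rw [← mul_sub, abs_mul, haa, one_mul]; exact hdist
      rwa [haτ] at this
    have h1 : s / 2 ≤ a * τ y := by
      have := abs_le.mp hay; linarith [this.1]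
    have h2 : a * τ y ≤ 3 / 2 * s := by
      have := abs_le.mp hay; linarith [this.2]
    have habs : |τ y| = a * τ y := by
      calc |τ y| = |a * τ y| := by rw [abs_mul, haa, one_mul]
        _ = a * τ y := abs_of_nonneg hyτ
    constructor
    · rw [habs]; linarith
    · rw [habs]; exact h2
  -- main measure chain
  have hQX : Q ∩ closedBall x r ⊆ Xs := fun y hy => hy.1.1
  have hchain : ENNReal.ofReal μmin * (ENNReal.ofReal c₀ * volume (closedBall x r)) ≤
      ENNReal.ofReal (γ * (3 / 2 * s) ^ α) := by
    calc ENNReal.ofReal μmin * (ENNReal.ofReal c₀ * volume (closedBall x r))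
        ≤ ENNReal.ofReal μmin * volume (Q ∩ closedBall x r) :=
          mul_le_mul_right (hreg a ha ⟨x, hxQ⟩ x hxQ r hr0.le hrr₀) _
      _ = ENNReal.ofReal μmin * volume ((Q ∩ closedBall x r) ∩ Xs) := by
          rw [Set.inter_eq_left.mpr hQX]
      _ ≤ P (Q ∩ closedBall x r) := hdens _ hQmeas
      _ ≤ P {y | 0 < |τ y| ∧ |τ y| ≤ 3 / 2 * s} := measure_mono hsub
      _ ≤ ENNReal.ofReal (γ * (3 / 2 * s) ^ α) := hmargin _ (by positivity)
  -- volume of the closed ball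
  have hvol : volume (closedBall x r) = ENNReal.ofReal (r ^ d) * B := by
    rw [Measure.addHaar_closedBall _ _ hr0.le, finrank_euclideanSpace_fin]
  have hrpow : (0:ℝ) < (3 / 2 * s) ^ α := Real.rpow_pos_of_pos (by positivity) _
  have hreal : μmin * (c₀ * (r ^ d * Bv)) ≤ γ * (3 / 2 * s) ^ α := by
    rw [hvol] at hchain
    have hBeq : B = ENNReal.ofReal Bv := (ENNReal.ofReal_toReal hBtop.ne).symm
    rw [hBeq, ← ENNReal.ofReal_mul (by positivity), ← ENNReal.ofReal_mul (by positivity),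
      ← ENNReal.ofReal_mul (by positivity)] at hchain
    exact (ENNReal.ofReal_le_ofReal_iff (by positivity)).mp hchain
  -- case split on the radius
  rcases le_total r₀ (s / (4 * L₁)) with hcase | hcase
  · -- large τ: s ≥ 4 L₁ r₀
    have : 4 * L₁ * r₀ ≤ s := by
      have := (le_div_iff₀ (by positivity : (0:ℝ) < 4 * L₁)).mp hcase
      linarith
    exact le_trans (min_le_left _ _) this
  · -- small radius case: r = s / (4 L₁)
    have hre : r = s / (4 * L₁) := min_eq_left hcase
    rw [hre] at hreal
    have hmulpow : (3 / 2 * s) ^ α = (3 / 2 : ℝ) ^ α * s ^ α :=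
      Real.mul_rpow (by norm_num) hs.le
    have h1 : C * s ^ ((d:ℕ):ℝ) ≤ D * s ^ α := by
      rw [Real.rpow_natCast]
      calc C * s ^ d = μmin * (c₀ * ((s / (4 * L₁)) ^ d * Bv)) := by
            rw [hCdef, div_pow]; field_simp
        _ ≤ γ * (3 / 2 * s) ^ α := hreal
        _ = D * s ^ α := by rw [hmulpow, hDdef]; ring
    have hsd : (0:ℝ) < s ^ ((d:ℕ):ℝ) := Real.rpow_pos_of_pos hs _
    have hz : (0:ℝ) < α - (d:ℝ) := by linarith
    have hsplit : s ^ α = s ^ ((d:ℕ):ℝ) * s ^ (α - (d:ℝ)) := by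
      rw [← Real.rpow_add hs]; ring_nf
    have h4 : C ≤ D * s ^ (α - (d:ℝ)) := by
      have h3 : C * s ^ ((d:ℕ):ℝ) ≤ (D * s ^ (α - (d:ℝ))) * s ^ ((d:ℕ):ℝ) := by
        rw [hsplit] at h1; linarith [h1]
      exact le_of_mul_le_mul_right h3 hsd
    have h2 : C / D ≤ s ^ (α - (d:ℝ)) := by
      rw [div_le_iff₀ hD]; linarith
    have h5 : τ₂ ≤ s := by
      calc τ₂ = (C / D) ^ (1 / (α - (d:ℝ))) := rfl
        _ ≤ (s ^ (α - (d:ℝ))) ^ (1 / (α - (d:ℝ))) :=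
            Real.rpow_le_rpow (by positivity) h2 (by positivity)
        _ = s := by
            rw [← Real.rpow_mul hs.le, mul_one_div, div_self hz.ne', Real.rpow_one]
    exact le_trans (min_le_right _ _) h5
end

section
/- Under the margin condition with α > 1, smoothness (τ continuous), strong density, and regularity of the optimal decision regions, every interior point x of the support X has a neighborhood on which τ does not change sign: there exist r > 0 and σ ∈ {-1, +1} with σ·τ(x') ≥ 0 for all x' with ‖x'-x‖ ≤ r. -/
open MeasureTheory Metric

lemma margin_aux_proj {m : ℕ} (e v : EuclideanSpace ℝ (Fin m)) (he : ‖e‖ = 1) :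
    ‖v - (inner ℝ e v : ℝ) • e‖ ≤ ‖v‖ := by
  have h := norm_sub_sq_real v ((inner ℝ e v : ℝ) • e)
  rw [real_inner_smul_right, norm_smul, he, Real.norm_eq_abs, mul_one] at h
  have hcomm : (inner ℝ v e : ℝ) = (inner ℝ e v : ℝ) := (real_inner_comm e v)
  rw [hcomm] at h
  have h2 : ‖v - (inner ℝ e v : ℝ) • e‖ ^ 2 ≤ ‖v‖ ^ 2 := by
    rw [h]; nlinarith [sq_abs (inner ℝ e v : ℝ), sq_nonneg (inner ℝ e v : ℝ)]
  have := Real.sqrt_le_sqrt h2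
  rwa [Real.sqrt_sq (norm_nonneg _), Real.sqrt_sq (norm_nonneg _)] at this

lemma margin_aux_cross (f : ℝ → ℝ) {L a c t : ℝ} (hL : 0 < L) (_hac : a ≤ c)
    (hlip : ∀ u ∈ Set.Icc a c, ∀ v ∈ Set.Icc a c, |f u - f v| ≤ L * |u - v|)
    (hfa : f a ≤ 0) (ht : 0 < t) (htc : t ≤ f c) :
    ∃ bb, Set.Ioc bb (bb + t / L) ⊆ Set.Icc a c ∩ {u | 0 < f u ∧ f u ≤ t} := by
  have hac : a ≤ c := _hac
  have hcont : ContinuousOn f (Set.Icc a c) := by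
    have hlow : LipschitzOnWith (Real.toNNReal L) f (Set.Icc a c) := by
      rw [lipschitzOnWith_iff_dist_le_mul]
      intro u hu v hv
      rw [Real.dist_eq, Real.dist_eq, Real.coe_toNNReal L hL.le]
      exact hlip u hu v hv
    exact hlow.continuousOn
  set A := Set.Icc a c ∩ f ⁻¹' Set.Iic 0 with hA
  have hA_closed : IsClosed A := hcont.preimage_isClosed_of_isClosed isClosed_Icc isClosed_Iic
  have hA_ne : A.Nonempty := ⟨a, ⟨le_refl a, hac⟩, hfa⟩
  have hA_bdd : BddAbove A := ⟨c, fun u hu => hu.1.2⟩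
  set b := sSup A with hb
  have hbA : b ∈ A := hA_closed.csSup_mem hA_ne hA_bdd
  have hb_ub : ∀ u ∈ A, u ≤ b := fun u hu => le_csSup hA_bdd hu
  have hfb : f b ≤ 0 := hbA.2
  have hbc : b + t / L ≤ c := by
    have h1 : |f c - f b| ≤ L * |c - b| := hlip c ⟨hac, le_refl _⟩ b hbA.1
    have hcb : b ≤ c := hbA.1.2
    rw [abs_of_nonneg (by linarith : (0:ℝ) ≤ c - b)] at h1
    have h2 : t ≤ L * (c - b) := le_trans (by linarith) (le_trans (le_abs_self _) h1)
    rw [← le_sub_iff_add_le', div_le_iff₀ hL]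
    linarith [h2]
  refine ⟨b, fun u hu => ?_⟩
  have hub : b < u := hu.1
  have huc : u ≤ c := le_trans hu.2 hbc
  have hua : a ≤ u := le_trans hbA.1.1 hub.le
  have hu_Icc : u ∈ Set.Icc a c := ⟨hua, huc⟩
  have hfu_pos : 0 < f u := by
    by_contra h
    push_neg at h
    exact absurd (hb_ub u ⟨hu_Icc, h⟩) (not_le.mpr hub)
  have hfu_le : f u ≤ t := by
    have h1 : |f u - f b| ≤ L * |u - b| := hlip u hu_Icc b hbA.1
    rw [abs_of_nonneg (by linarith : (0:ℝ) ≤ u - b)] at h1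
    have h3 : u - b ≤ t / L := by linarith [hu.2]
    have h4 : L * (u - b) ≤ L * (t / L) := mul_le_mul_of_nonneg_left h3 hL.le
    rw [mul_div_cancel₀ _ hL.ne'] at h4
    have := le_trans (le_abs_self _) h1
    linarith
  exact ⟨hu_Icc, hfu_pos, hfu_le⟩

set_option maxHeartbeats 2000000 in
/-- Under the margin condition with `α > 1`, Lipschitz smoothness of the CATE `τ`,
the strong density condition, and `(c₀,r₀)`-regularity of the non-empty optimal decision
regions, every interior point `x` of the support `Xs` has a neighborhood on which `τ`
does not change sign: there exist `r > 0` and `σ ∈ {-1,+1}` with `σ·τ(x') ≥ 0` for all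
`x'` with `‖x' - x‖ ≤ r`. -/
theorem margin_no_cross (d : ℕ) (hd : 0 < d)
    (P : Measure (EuclideanSpace ℝ (Fin d))) [IsProbabilityMeasure P]
    (Xs : Set (EuclideanSpace ℝ (Fin d))) (τ : EuclideanSpace ℝ (Fin d) → ℝ)
    (L₁ γ α μmin μmax c₀ r₀ : ℝ)
    (hXscomp : IsCompact Xs)
    (hXscube : Xs ⊆ {x | ∀ i, x i ∈ Set.Icc (0 : ℝ) 1})
    (hL₁ : 0 < L₁)
    (hLip : ∀ x ∈ Xs, ∀ y ∈ Xs, |τ x - τ y| ≤ 2 * L₁ * ‖x - y‖)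
    (hμmin : 0 < μmin) (hμmax : μmin ≤ μmax)
    (hdenslow : ∀ A : Set (EuclideanSpace ℝ (Fin d)), MeasurableSet A →
      ENNReal.ofReal μmin * volume (A ∩ Xs) ≤ P A)
    (hdenshigh : ∀ A : Set (EuclideanSpace ℝ (Fin d)), MeasurableSet A →
      P A ≤ ENNReal.ofReal μmax * volume (A ∩ Xs))
    (hsupp : P Xs = 1)
    (hc₀ : 0 < c₀) (hc₀1 : c₀ ≤ 1) (hr₀ : 0 < r₀)
    (hQne : ∀ a : ℝ, a = 1 ∨ a = -1 → ({x ∈ Xs | 0 ≤ a * τ x}).Nonempty)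
    (hreg : ∀ a : ℝ, a = 1 ∨ a = -1 →
      ∀ x ∈ {x ∈ Xs | 0 ≤ a * τ x}, ∀ r : ℝ, 0 ≤ r → r ≤ r₀ →
        ENNReal.ofReal c₀ * volume (closedBall x r) ≤
          volume ({x ∈ Xs | 0 ≤ a * τ x} ∩ closedBall x r))
    (hγ : 0 < γ) (hα : 1 < α)
    (hmargin : ∀ t : ℝ, 0 < t →
      P {x | 0 < |τ x| ∧ |τ x| ≤ t} ≤ ENNReal.ofReal (γ * t ^ α)) :
    ∀ x ∈ interior Xs, ∃ r : ℝ, 0 < r ∧ ∃ σ : ℝ, (σ = 1 ∨ σ = -1) ∧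
      ∀ x' : EuclideanSpace ℝ (Fin d), ‖x' - x‖ ≤ r → 0 ≤ σ * τ x' := by
  obtain ⟨n, rfl⟩ : ∃ n, d = n + 1 := ⟨d - 1, (Nat.succ_pred_eq_of_pos hd).symm⟩
  intro x hx
  by_contra hcon
  push_neg at hcon
  have hXs_x : x ∈ Xs := interior_subset hx
  obtain ⟨ε, hε, hball⟩ := Metric.isOpen_iff.mp isOpen_interior x hx
  set R₀ := min (ε/2) r₀ with hR₀def
  have hR₀pos : 0 < R₀ := lt_min (half_pos hε) hr₀
  have hR₀r₀ : R₀ ≤ r₀ := min_le_right _ _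
  have hball' : closedBall x R₀ ⊆ Xs := by
    intro y hy
    refine interior_subset (hball ?_)
    rw [mem_ball]
    have : dist y x ≤ R₀ := mem_closedBall.mp hy
    have h2 : R₀ ≤ ε/2 := min_le_left _ _
    linarith
  -- witnesses of sign change at every scale
  have wneg : ∀ r : ℝ, 0 < r → ∃ p, ‖p - x‖ ≤ r ∧ τ p < 0 := by
    intro r hr
    obtain ⟨p, hp1, hp2⟩ := hcon r hr 1 (Or.inl rfl)
    exact ⟨p, hp1, by linarith [hp2]⟩
  have wpos : ∀ r : ℝ, 0 < r → ∃ p, ‖p - x‖ ≤ r ∧ 0 < τ p := by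
    intro r hr
    obtain ⟨p, hp1, hp2⟩ := hcon r hr (-1) (Or.inr rfl)
    exact ⟨p, hp1, by linarith [hp2]⟩
  -- τ x = 0
  have τx0 : τ x = 0 := by
    rcases lt_trichotomy (τ x) 0 with h | h | h
    · obtain ⟨p, hp1, hp2⟩ := wpos (min R₀ ((-τ x)/(4*L₁)))
        (lt_min hR₀pos (div_pos (by linarith) (by positivity)))
      have hpXs : p ∈ Xs := hball' (by
        rw [mem_closedBall_iff_norm]; exact hp1.trans (min_le_left _ _))
      have hl := hLip x hXs_x p hpXs
      have h1 : ‖p - x‖ ≤ (-τ x)/(4*L₁) := hp1.trans (min_le_right _ _)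
      have h2 : ‖x - p‖ = ‖p - x‖ := norm_sub_rev x p
      have h3 : |τ x - τ p| ≥ τ p - τ x := by
        rw [abs_sub_comm]; exact le_abs_self _
      have h4 : 2 * L₁ * ‖p - x‖ ≤ 2 * L₁ * ((-τ x)/(4*L₁)) :=
        mul_le_mul_of_nonneg_left h1 (by positivity)
      have h5 : 2 * L₁ * ((-τ x)/(4*L₁)) = (-τ x)/2 := by field_simp; ring
      rw [h2] at hl
      nlinarith
    · exact h
    · obtain ⟨p, hp1, hp2⟩ := wneg (min R₀ ((τ x)/(4*L₁)))
        (lt_min hR₀pos (div_pos (by linarith) (by positivity)))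
      have hpXs : p ∈ Xs := hball' (by
        rw [mem_closedBall_iff_norm]; exact hp1.trans (min_le_left _ _))
      have hl := hLip x hXs_x p hpXs
      have h1 : ‖p - x‖ ≤ (τ x)/(4*L₁) := hp1.trans (min_le_right _ _)
      have h2 : ‖x - p‖ = ‖p - x‖ := norm_sub_rev x p
      have h3 : |τ x - τ p| ≥ τ x - τ p := le_abs_self _
      have h4 : 2 * L₁ * ‖p - x‖ ≤ 2 * L₁ * ((τ x)/(4*L₁)) :=
        mul_le_mul_of_nonneg_left h1 (by positivity)
      have h5 : 2 * L₁ * ((τ x)/(4*L₁)) = (τ x)/2 := by field_simp; ring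
      rw [h2] at hl
      nlinarith
  -- the positive point z
  obtain ⟨z, hz_r, hz_pos⟩ := wpos (R₀/2) (by positivity)
  have hz_Xs : z ∈ Xs := hball' (by
    rw [mem_closedBall_iff_norm]; exact hz_r.trans (by linarith))
  have hzx : z ≠ x := by
    intro h
    rw [h, τx0] at hz_pos
    exact lt_irrefl 0 hz_pos
  set s := τ z with hs_def
  set c := ‖z - x‖ with hc_def
  have hc_le : c ≤ R₀ / 2 := hz_r
  have hc_pos : 0 < c := by rw [hc_def]; exact norm_sub_pos_iff.mpr hzx
  have hs_le : s ≤ 2 * L₁ * c := by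
    have := hLip z hz_Xs x hXs_x
    rw [τx0] at this
    have := le_abs_self (τ z - 0)
    linarith [hLip z hz_Xs x hXs_x, le_abs_self (τ z - 0), τx0]
  set ρ₀ := s / (4 * L₁) with hρ₀def
  have hρ₀pos : 0 < ρ₀ := by positivity
  have h2ρ₀c : 2 * ρ₀ ≤ c := by
    rw [hρ₀def]
    rw [show (2:ℝ) * (s / (4 * L₁)) = s / (2 * L₁) by field_simp; ring]
    rw [div_le_iff₀ (by positivity)]
    linarith
  have hρ₀R : ρ₀ ≤ R₀ / 4 := by
    rw [hρ₀def, div_le_iff₀ (by positivity : (0:ℝ) < 4 * L₁)]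
    nlinarith
  have hρ₀r₀ : ρ₀ ≤ r₀ := le_trans hρ₀R (by linarith)
  -- the unit direction e
  set e := c⁻¹ • (z - x) with he_def
  have he : ‖e‖ = 1 := by
    rw [he_def, norm_smul, Real.norm_eq_abs, abs_of_pos (inv_pos.mpr hc_pos), ← hc_def,
      inv_mul_cancel₀ hc_pos.ne']
  have hze : z - x = c • e := by
    rw [he_def, smul_inv_smul₀ hc_pos.ne']
  -- orthonormal basis with first vector e
  have horth : Orthonormal ℝ (({0} : Set (Fin (n+1))).restrict
      (fun _ : Fin (n+1) => e)) := by
    constructor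
    · intro i
      exact he
    · intro i j hij
      exfalso
      apply hij
      apply Subtype.ext
      have hi := i.2
      have hj := j.2
      simp only [Set.mem_singleton_iff] at hi hj
      rw [hi, hj]
  obtain ⟨b, hb⟩ := horth.exists_orthonormalBasis_extension_of_card_eq
    (by simp [finrank_euclideanSpace_fin])
  have hb0 : b 0 = e := hb 0 rfl
  -- the coordinate system
  set Φ : EuclideanSpace ℝ (Fin (n+1)) ≃ᵐ ℝ × (Fin n → ℝ) :=
    b.measurableEquiv.trans ((MeasurableEquiv.toLp 2 (Fin (n+1) → ℝ)).symm.trans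
      (MeasurableEquiv.piFinSuccAbove (fun _ : Fin (n+1) => ℝ) 0)) with hΦdef
  have hΦmp : MeasurePreserving Φ volume volume := by
    have h1 := b.measurePreserving_measurableEquiv
    have h2 := EuclideanSpace.volume_preserving_symm_measurableEquiv_toLp (Fin (n+1))
    have h3 := MeasureTheory.volume_preserving_piFinSuccAbove (fun _ : Fin (n+1) => ℝ) 0
    exact (h3.comp (h2.comp h1))
  have hΦsm : MeasurePreserving Φ.symm volume volume := MeasurePreserving.symm _ hΦmp
  have hfst : ∀ w : EuclideanSpace ℝ (Fin (n+1)), (Φ w).1 = b.repr w 0 := fun _ => rfl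
  have hsnd : ∀ w : EuclideanSpace ℝ (Fin (n+1)),
      (Φ w).2 = fun j => b.repr w ((0 : Fin (n+1)).succAbove j) := fun _ => rfl
  have hΦ1 : ∀ w : EuclideanSpace ℝ (Fin (n+1)), (Φ w).1 = (inner ℝ e w : ℝ) := by
    intro w
    rw [hfst, b.repr_apply_apply, hb0]
  have key : ∀ (w : EuclideanSpace ℝ (Fin (n+1))) (u : ℝ),
      Φ.symm (u, (Φ w).2) = w + (u - (Φ w).1) • e := by
    intro w u
    have hrepr : b.repr (w + (u - (Φ w).1) • e)
        = b.repr w + (u - (Φ w).1) • EuclideanSpace.single 0 1 := by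
      rw [map_add, LinearIsometryEquiv.map_smul, ← hb0, b.repr_self]
    have hmain : Φ (w + (u - (Φ w).1) • e) = (u, (Φ w).2) := by
      apply Prod.ext
      · rw [hfst, hrepr]
        simp only [PiLp.add_apply, PiLp.smul_apply, EuclideanSpace.single_apply,
          if_true, smul_eq_mul, mul_one]
        rw [hfst]
        ring
      · rw [hsnd, hsnd]
        funext j
        rw [hrepr]
        simp only [PiLp.add_apply, PiLp.smul_apply, EuclideanSpace.single_apply,
          smul_eq_mul]
        rw [if_neg (Fin.succAbove_ne 0 j), mul_zero, add_zero]
    rw [← hmain, MeasurableEquiv.symm_apply_apply]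
  -- continuity of τ on Xs
  have hτcont : ContinuousOn τ Xs := by
    have hlow : LipschitzOnWith (Real.toNNReal (2*L₁)) τ Xs := by
      rw [lipschitzOnWith_iff_dist_le_mul]
      intro p hp q hq
      rw [Real.dist_eq, dist_eq_norm, Real.coe_toNNReal _ (by positivity)]
      exact hLip p hp q hq
    exact hlow.continuousOn
  -- the negative-region set N
  set N : Set (EuclideanSpace ℝ (Fin (n+1))) :=
    {y ∈ Xs | 0 ≤ (-1 : ℝ) * τ y} ∩ closedBall x ρ₀ with hNdef
  have hregN : ENNReal.ofReal c₀ * volume (closedBall x ρ₀) ≤ volume N := by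
    exact hreg (-1) (Or.inr rfl) x ⟨hXs_x, by rw [τx0]; simp⟩ ρ₀ hρ₀pos.le hρ₀r₀
  have hN_meas : MeasurableSet N := by
    have h1 : {y ∈ Xs | 0 ≤ (-1 : ℝ) * τ y} = Xs ∩ τ ⁻¹' Set.Iic 0 := by
      ext y
      simp only [Set.mem_setOf_eq, Set.mem_inter_iff, Set.mem_preimage, Set.mem_Iic]
      constructor
      · rintro ⟨h1, h2⟩; exact ⟨h1, by linarith⟩
      · rintro ⟨h1, h2⟩; exact ⟨h1, by linarith⟩
    rw [hNdef, h1]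
    exact ((hτcont.preimage_isClosed_of_isClosed hXscomp.isClosed
      isClosed_Iic).inter isClosed_closedBall).measurableSet
  have hN_Xs : N ⊆ Xs := fun y hy => hy.1.1
  have hN_neg : ∀ y ∈ N, τ y ≤ 0 := fun y hy => by
    have := hy.1.2; linarith
  have hN_ball : ∀ y ∈ N, ‖y - x‖ ≤ ρ₀ := fun y hy =>
    mem_closedBall_iff_norm.mp hy.2
  -- volume of the small ball
  set Vr := (volume (closedBall x ρ₀)).toReal with hVrdef
  have hVfin : volume (closedBall x ρ₀) ≠ ⊤ := (measure_closedBall_lt_top).ne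
  have hVpos : 0 < Vr :=
    ENNReal.toReal_pos (measure_closedBall_pos volume x hρ₀pos).ne' hVfin
  have hV : volume (closedBall x ρ₀) = ENNReal.ofReal Vr :=
    (ENNReal.ofReal_toReal hVfin).symm
  -- main quantitative inequality
  have main : ∀ t : ℝ, 0 < t → t ≤ s/2 →
      μmin * ((t/(2*L₁)) * (c₀ * Vr)) ≤ 2*ρ₀ * (γ * t ^ α) := by
    intro t ht ht2
    set U : Set (EuclideanSpace ℝ (Fin (n+1))) :=
      {y | y ∈ closedBall x R₀ ∧ 0 < τ y ∧ τ y ≤ t} with hUdef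
    have hU_meas : MeasurableSet U := by
      have hUeq : U = (closedBall x R₀ ∩ τ ⁻¹' Set.Iic t) \
          (closedBall x R₀ ∩ τ ⁻¹' Set.Iic 0) := by
        ext y
        simp only [hUdef, Set.mem_setOf_eq, Set.mem_diff, Set.mem_inter_iff,
          Set.mem_preimage, Set.mem_Iic]
        constructor
        · rintro ⟨h1, h2, h3⟩
          exact ⟨⟨h1, h3⟩, fun hh => absurd hh.2 (not_le.mpr h2)⟩
        · rintro ⟨⟨h1, h3⟩, h2⟩
          refine ⟨h1, ?_, h3⟩
          by_contra hneg
          push_neg at hneg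
          exact h2 ⟨h1, hneg⟩
      rw [hUeq]
      have hc1 : IsClosed (closedBall x R₀ ∩ τ ⁻¹' Set.Iic t) :=
        (hτcont.mono hball').preimage_isClosed_of_isClosed isClosed_closedBall isClosed_Iic
      have hc0 : IsClosed (closedBall x R₀ ∩ τ ⁻¹' Set.Iic 0) :=
        (hτcont.mono hball').preimage_isClosed_of_isClosed isClosed_closedBall isClosed_Iic
      exact hc1.measurableSet.diff hc0.measurableSet
    have hU_Xs : U ⊆ Xs := fun y hy => hball' hy.1
    -- transfer to coordinates
    set WU := Φ.symm ⁻¹' U with hWUdef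
    set WN := Φ.symm ⁻¹' N with hWNdef
    have hWU_meas : MeasurableSet WU := Φ.symm.measurable hU_meas
    have hWN_meas : MeasurableSet WN := Φ.symm.measurable hN_meas
    have hvolU : volume WU = volume U := hΦsm.measure_preimage hU_meas.nullMeasurableSet
    have hvolN : volume WN = volume N := hΦsm.measure_preimage hN_meas.nullMeasurableSet
    -- pointwise fiber inequality
    have hpoint : ∀ ξ : Fin n → ℝ,
        ENNReal.ofReal (t/(2*L₁)) * volume ((fun u : ℝ => (u, ξ)) ⁻¹' WN) ≤
        ENNReal.ofReal (2*ρ₀) * volume ((fun u : ℝ => (u, ξ)) ⁻¹' WU) := by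
      intro ξ
      rcases Set.eq_empty_or_nonempty ((fun u : ℝ => (u, ξ)) ⁻¹' WN) with hemp | hne
      · rw [hemp]
        simp
      · obtain ⟨u₀, hu₀⟩ := hne
        set n' := Φ.symm (u₀, ξ) with hn'def
        have hn'N : n' ∈ N := hu₀
        have hn'Xs : n' ∈ Xs := hN_Xs hn'N
        have hτn' : τ n' ≤ 0 := hN_neg n' hn'N
        have hn'ball : ‖n' - x‖ ≤ ρ₀ := hN_ball n' hn'N
        have hΦn' : Φ n' = (u₀, ξ) := Φ.apply_symm_apply _
        set pt : ℝ → EuclideanSpace ℝ (Fin (n+1)) := fun u => Φ.symm (u, ξ) with hptdef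
        have hpt : ∀ u, pt u = n' + (u - u₀) • e := by
          intro u
          have hk := key n' u
          rw [hΦn'] at hk
          exact hk
        set ux := (inner ℝ e x : ℝ) with huxdef
        set c₁ := (inner ℝ e (n' - x) : ℝ) with hc₁def
        have hu₀x : u₀ = ux + c₁ := by
          have h1 : (Φ n').1 = (inner ℝ e n' : ℝ) := hΦ1 n'
          rw [hΦn'] at h1
          rw [hc₁def, inner_sub_right, huxdef] at *
          simp only at h1
          linarith [h1]
        have hc₁abs : |c₁| ≤ ρ₀ := by
          rw [hc₁def]
          refine (abs_real_inner_le_norm e _).trans ?_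
          rw [he, one_mul]
          exact hn'ball
        set uz := ux + c with huzdef
        have hu₀z : u₀ ≤ uz := by
          have := abs_le.mp hc₁abs
          rw [hu₀x, huzdef]
          linarith
        -- points on the line
        have hptx : ∀ u, pt u - x = ((n' - x) - c₁ • e) + (u - ux) • e := by
          intro u
          rw [hpt, hu₀x]
          have harith : u - (ux + c₁) = (u - ux) - c₁ := by ring
          rw [harith, sub_smul]
          abel
        have hproj : ‖(n' - x) - c₁ • e‖ ≤ ρ₀ := by
          rw [hc₁def]
          exact (margin_aux_proj e (n' - x) he).trans hn'ball
        have hptball : ∀ u ∈ Set.Icc u₀ uz, pt u ∈ closedBall x R₀ := by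
          intro u hu
          rw [mem_closedBall_iff_norm, hptx]
          have h1 : ‖((n' - x) - c₁ • e) + (u - ux) • e‖ ≤ ρ₀ + |u - ux| := by
            refine (norm_add_le _ _).trans ?_
            rw [norm_smul, he, mul_one, Real.norm_eq_abs]
            linarith [hproj]
          have h2 : |u - ux| ≤ R₀/2 := by
            have hl := hu.1
            have hr := hu.2
            have habs := abs_le.mp hc₁abs
            rw [hu₀x] at hl
            rw [huzdef] at hr
            rw [abs_le]
            constructor
            · linarith
            · linarith
          linarith
        have hptXs : ∀ u ∈ Set.Icc u₀ uz, pt u ∈ Xs :=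
          fun u hu => hball' (hptball u hu)
        have hptdiff : ∀ u v : ℝ, pt u - pt v = (u - v) • e := by
          intro u v
          rw [hpt, hpt, add_sub_add_left_eq_sub, ← sub_smul]
          congr 1
          ring
        have hflip : ∀ u ∈ Set.Icc u₀ uz, ∀ v ∈ Set.Icc u₀ uz,
            |τ (pt u) - τ (pt v)| ≤ (2*L₁) * |u - v| := by
          intro u hu v hv
          have h1 := hLip (pt u) (hptXs u hu) (pt v) (hptXs v hv)
          rwa [hptdiff, norm_smul, he, mul_one, Real.norm_eq_abs] at h1
        have hfu₀ : τ (pt u₀) ≤ 0 := by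
          have : pt u₀ = n' := by rw [hpt]; simp
          rw [this]
          exact hτn'
        have hzIcc : uz ∈ Set.Icc u₀ uz := ⟨hu₀z, le_refl _⟩
        have hptuz : s/2 ≤ τ (pt uz) := by
          have hd1 : pt uz - z = (n' - x) - c₁ • e := by
            have h1 : pt uz - z = (pt uz - x) - (z - x) := by abel
            rw [hptx uz, hze] at h1
            have h2 : uz - ux = c := by rw [huzdef]; ring
            rw [h2] at h1
            rw [h1]
            abel
          have hnorm : ‖pt uz - z‖ ≤ ρ₀ := by rw [hd1]; exact hproj
          have h3 := hLip (pt uz) (hptXs uz hzIcc) z hz_Xs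
          have h4 : 2 * L₁ * ‖pt uz - z‖ ≤ 2 * L₁ * ρ₀ :=
            mul_le_mul_of_nonneg_left hnorm (by positivity)
          have h5 : 2 * L₁ * ρ₀ = s/2 := by rw [hρ₀def]; field_simp; ring
          have h6 : τ z - τ (pt uz) ≤ |τ (pt uz) - τ z| := by
            rw [abs_sub_comm]; exact le_abs_self _
          rw [← hs_def] at *
          nlinarith
        -- crossing
        have htuz : t ≤ τ (pt uz) := le_trans ht2 hptuz
        obtain ⟨bb, hbb⟩ := margin_aux_cross (fun u => τ (pt u)) (by positivity : (0:ℝ) < 2*L₁)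
          hu₀z hflip hfu₀ ht htuz
        have hfibU : Set.Ioc bb (bb + t/(2*L₁)) ⊆ (fun u : ℝ => (u, ξ)) ⁻¹' WU := by
          intro u hu
          have hu' := hbb hu
          have huIcc : u ∈ Set.Icc u₀ uz := hu'.1
          have hupos : 0 < τ (pt u) := hu'.2.1
          have hule : τ (pt u) ≤ t := hu'.2.2
          show Φ.symm (u, ξ) ∈ U
          exact ⟨hptball u huIcc, hupos, hule⟩
        have hfibU_vol : ENNReal.ofReal (t/(2*L₁)) ≤
            volume ((fun u : ℝ => (u, ξ)) ⁻¹' WU) := by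
          refine le_trans (le_of_eq ?_) (measure_mono hfibU)
          rw [Real.volume_Ioc]
          congr 1
          ring
        have hfibN_vol : volume ((fun u : ℝ => (u, ξ)) ⁻¹' WN) ≤
            ENNReal.ofReal (2*ρ₀) := by
          have hsub : (fun u : ℝ => (u, ξ)) ⁻¹' WN ⊆ Set.Icc (ux - ρ₀) (ux + ρ₀) := by
            intro u hu
            have hptN : pt u ∈ N := hu
            have h1 : ‖pt u - x‖ ≤ ρ₀ := hN_ball _ hptN
            have h2 : (inner ℝ e (pt u) : ℝ) = u := by
              have h3 := hΦ1 (pt u)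
              have h4 : Φ (pt u) = (u, ξ) := Φ.apply_symm_apply _
              rw [h4] at h3
              exact h3.symm
            have h5 : |u - ux| ≤ ρ₀ := by
              have h6 : u - ux = (inner ℝ e (pt u - x) : ℝ) := by
                rw [inner_sub_right, h2, huxdef]
              rw [h6]
              refine (abs_real_inner_le_norm e _).trans ?_
              rw [he, one_mul]
              exact h1
            have := abs_le.mp h5
            constructor
            · linarith
            · linarith
          refine le_trans (measure_mono hsub) (le_of_eq ?_)
          rw [Real.volume_Icc]
          congr 1
          ring
        calc ENNReal.ofReal (t/(2*L₁)) * volume ((fun u : ℝ => (u, ξ)) ⁻¹' WN)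
            ≤ ENNReal.ofReal (t/(2*L₁)) * ENNReal.ofReal (2*ρ₀) :=
              mul_le_mul_right hfibN_vol _
          _ = ENNReal.ofReal (2*ρ₀) * ENNReal.ofReal (t/(2*L₁)) := mul_comm _ _
          _ ≤ ENNReal.ofReal (2*ρ₀) * volume ((fun u : ℝ => (u, ξ)) ⁻¹' WU) :=
              mul_le_mul_right hfibU_vol _
    -- integrate over fibers
    have hsliceN : volume WN = ∫⁻ ξ, volume ((fun u : ℝ => (u, ξ)) ⁻¹' WN) := by
      rw [Measure.volume_eq_prod]
      exact Measure.prod_apply_symm hWN_meas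
    have hsliceU : volume WU = ∫⁻ ξ, volume ((fun u : ℝ => (u, ξ)) ⁻¹' WU) := by
      rw [Measure.volume_eq_prod]
      exact Measure.prod_apply_symm hWU_meas
    have hstep1 : ENNReal.ofReal (t/(2*L₁)) *
        (ENNReal.ofReal c₀ * volume (closedBall x ρ₀))
        ≤ ENNReal.ofReal (2*ρ₀) * volume U := by
      calc ENNReal.ofReal (t/(2*L₁)) * (ENNReal.ofReal c₀ * volume (closedBall x ρ₀))
          ≤ ENNReal.ofReal (t/(2*L₁)) * volume N := mul_le_mul_right hregN _
        _ = ENNReal.ofReal (t/(2*L₁)) * volume WN := by rw [hvolN]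
        _ = ENNReal.ofReal (t/(2*L₁)) * ∫⁻ ξ, volume ((fun u : ℝ => (u, ξ)) ⁻¹' WN) := by
            rw [hsliceN]
        _ = ∫⁻ ξ, ENNReal.ofReal (t/(2*L₁)) * volume ((fun u : ℝ => (u, ξ)) ⁻¹' WN) :=
            (lintegral_const_mul' _ _ ENNReal.ofReal_ne_top).symm
        _ ≤ ∫⁻ ξ, ENNReal.ofReal (2*ρ₀) * volume ((fun u : ℝ => (u, ξ)) ⁻¹' WU) :=
            lintegral_mono hpoint
        _ = ENNReal.ofReal (2*ρ₀) * ∫⁻ ξ, volume ((fun u : ℝ => (u, ξ)) ⁻¹' WU) :=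
            lintegral_const_mul' _ _ ENNReal.ofReal_ne_top
        _ = ENNReal.ofReal (2*ρ₀) * volume WU := by rw [hsliceU]
        _ = ENNReal.ofReal (2*ρ₀) * volume U := by rw [hvolU]
    have hstep2 : ENNReal.ofReal μmin * volume U ≤ ENNReal.ofReal (γ * t ^ α) := by
      have hUX : U ∩ Xs = U := Set.inter_eq_self_of_subset_left hU_Xs
      calc ENNReal.ofReal μmin * volume U
          = ENNReal.ofReal μmin * volume (U ∩ Xs) := by rw [hUX]
        _ ≤ P U := hdenslow U hU_meas
        _ ≤ P {y | 0 < |τ y| ∧ |τ y| ≤ t} := by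
            refine measure_mono fun y hy => ?_
            refine ⟨?_, ?_⟩
            · rw [abs_of_pos hy.2.1]; exact hy.2.1
            · rw [abs_of_pos hy.2.1]; exact hy.2.2
        _ ≤ ENNReal.ofReal (γ * t ^ α) := hmargin t ht
    have hcomb : ENNReal.ofReal μmin * (ENNReal.ofReal (t/(2*L₁)) *
        (ENNReal.ofReal c₀ * volume (closedBall x ρ₀)))
        ≤ ENNReal.ofReal (2*ρ₀) * ENNReal.ofReal (γ * t ^ α) := by
      calc ENNReal.ofReal μmin * (ENNReal.ofReal (t/(2*L₁)) *
          (ENNReal.ofReal c₀ * volume (closedBall x ρ₀)))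
          ≤ ENNReal.ofReal μmin * (ENNReal.ofReal (2*ρ₀) * volume U) :=
            mul_le_mul_right hstep1 _
        _ = ENNReal.ofReal (2*ρ₀) * (ENNReal.ofReal μmin * volume U) := by ring
        _ ≤ ENNReal.ofReal (2*ρ₀) * ENNReal.ofReal (γ * t ^ α) :=
            mul_le_mul_right hstep2 _
    rw [hV] at hcomb
    have hLrw : ENNReal.ofReal (μmin * ((t/(2*L₁)) * (c₀ * Vr)))
        = ENNReal.ofReal μmin * (ENNReal.ofReal (t/(2*L₁)) *
          (ENNReal.ofReal c₀ * ENNReal.ofReal Vr)) := by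
      rw [ENNReal.ofReal_mul hμmin.le,
        ENNReal.ofReal_mul (by positivity : (0:ℝ) ≤ t/(2*L₁)),
        ENNReal.ofReal_mul hc₀.le]
    have hRrw : ENNReal.ofReal (2*ρ₀ * (γ * t ^ α))
        = ENNReal.ofReal (2*ρ₀) * ENNReal.ofReal (γ * t ^ α) :=
      ENNReal.ofReal_mul (by positivity)
    have hfinal : ENNReal.ofReal (μmin * ((t/(2*L₁)) * (c₀ * Vr)))
        ≤ ENNReal.ofReal (2*ρ₀ * (γ * t ^ α)) := by
      rw [hLrw, hRrw]
      exact hcomb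
    have hrhs_nonneg : (0:ℝ) ≤ 2*ρ₀ * (γ * t ^ α) := by positivity
    exact (ENNReal.ofReal_le_ofReal_iff hrhs_nonneg).mp hfinal
  -- final contradiction by taking t small
  set Q := μmin * c₀ * Vr / (2*L₁) with hQdef
  have hQpos : 0 < Q := by positivity
  set ε' := Q / (2 * (2*ρ₀*γ)) with hε'def
  have hε'pos : 0 < ε' := by positivity
  set B := ε' ^ (1/(α-1)) with hBdef
  have hBpos : 0 < B := Real.rpow_pos_of_pos hε'pos _
  set t := min (s/2) B with htdef
  have htpos : 0 < t := lt_min (by positivity) hBpos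
  have ht2 : t ≤ s/2 := min_le_left _ _
  have h := main t htpos ht2
  have htα : t ^ α = t * t ^ (α - 1) := by
    nth_rewrite 1 [show α = 1 + (α - 1) by ring]
    rw [Real.rpow_add htpos, Real.rpow_one]
  have htB : t ^ (α-1) ≤ ε' := by
    have h1 : t ^ (α-1) ≤ B ^ (α-1) :=
      Real.rpow_le_rpow htpos.le (min_le_right _ _) (by linarith)
    have h2 : B ^ (α-1) = ε' := by
      rw [hBdef, ← Real.rpow_mul hε'pos.le,
        one_div_mul_cancel (ne_of_gt (by linarith : (0:ℝ) < α - 1)), Real.rpow_one]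
    linarith
  rw [htα] at h
  have hLHS : μmin * ((t/(2*L₁)) * (c₀ * Vr)) = t * Q := by rw [hQdef]; ring
  have hRHS : 2*ρ₀ * (γ * (t * t ^ (α-1))) ≤ t * (Q/2) := by
    have h1 : 2*ρ₀ * (γ * (t * t ^ (α-1))) = (t ^ (α-1)) * (t * (2*ρ₀*γ)) := by ring
    have h2 : (t ^ (α-1)) * (t * (2*ρ₀*γ)) ≤ ε' * (t * (2*ρ₀*γ)) := by
      apply mul_le_mul_of_nonneg_right htB
      positivity
    have h3 : ε' * (t * (2*ρ₀*γ)) = t * (Q/2) := by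
      rw [hε'def]
      have hne : (2*ρ₀*γ) ≠ 0 := by positivity
      field_simp
    linarith
  rw [hLHS] at h
  have hcontra : t * Q ≤ t * (Q/2) := le_trans h hRHS
  nlinarith [mul_pos htpos hQpos]
end

section
/- Fix d ≥ 1, c₀ ∈ (0,1), and ⌊β⌋* ≥ 0. Then λ₀ := (1/4)μ_min · inf over unit vectors W ∈ ℝ^{M_β} and compact sets S ⊆ B(0,1) with Leb(S) = c₀v_d/2^d of ∫_S (Σ_{|s| ≤ ⌊β⌋*} W_s u^s)² du is strictly positive. -/
open MeasureTheory Metric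
open scoped ENNReal

lemma mv_null : ∀ (n : ℕ) (p : MvPolynomial (Fin n) ℝ), p ≠ 0 →
    (volume : Measure (Fin n → ℝ)) {x | MvPolynomial.eval x p = 0} = 0 := by
  intro n
  induction n with
  | zero =>
    intro p hp
    obtain ⟨a, rfl⟩ := MvPolynomial.C_surjective (Fin 0) p
    have ha : a ≠ 0 := fun h => hp (by simp [h])
    simp [ha]
  | succ n ih =>
    intro p hp
    set q := MvPolynomial.finSuccEquiv ℝ n p with hqdef
    have hq : q ≠ 0 := fun h => hp ((MvPolynomial.finSuccEquiv ℝ n).injective (by simp [← hqdef, h]))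
    obtain ⟨k, hk⟩ : ∃ k, q.coeff k ≠ 0 := by
      by_contra h
      push_neg at h
      exact hq (Polynomial.ext fun k => by simp [h k])
    have hN := ih _ hk
    have hae : ∀ᵐ y : Fin n → ℝ, MvPolynomial.eval y (q.coeff k) ≠ 0 := by
      rw [ae_iff]
      convert hN using 2
      ext y; simp
    -- the set in product form
    set E : Set ((Fin n → ℝ) × ℝ) := {z | MvPolynomial.eval (Fin.cons z.2 z.1) p = 0} with hE
    have hcont : Continuous fun z : (Fin n → ℝ) × ℝ => MvPolynomial.eval (Fin.cons z.2 z.1) p := by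
      have hcons : Continuous fun z : (Fin n → ℝ) × ℝ => (Fin.cons z.2 z.1 : Fin (n+1) → ℝ) := by
        refine continuous_pi fun i => ?_
        refine Fin.cases ?_ ?_ i
        · simpa using continuous_snd
        · intro j; simp only [Fin.cons_succ]; fun_prop
      exact (MvPolynomial.continuous_eval (p := p)).comp hcons
    have hEm : MeasurableSet E := (isClosed_singleton.preimage hcont).measurableSet
    have key : (volume : Measure ((Fin n → ℝ) × ℝ)) E = 0 := by
      rw [Measure.volume_eq_prod, Measure.prod_apply hEm]
      have h0 : ∀ᵐ y : Fin n → ℝ, (volume : Measure ℝ) (Prod.mk y ⁻¹' E) = 0 := by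
        filter_upwards [hae] with y hy
        have hpoly : (q.map (MvPolynomial.eval y)) ≠ 0 := by
          intro h
          apply hy
          have := congrArg (fun r => Polynomial.coeff r k) h
          simpa [Polynomial.coeff_map] using this
        have hsub : Prod.mk y ⁻¹' E ⊆ {a : ℝ | (q.map (MvPolynomial.eval y)).IsRoot a} := by
          intro a ha
          have h1 : MvPolynomial.eval (Fin.cons a y) p = 0 := ha
          rw [MvPolynomial.eval_eq_eval_mv_eval'] at h1
          exact h1
        exact (((Polynomial.finite_setOf_isRoot hpoly).subset hsub)).measure_zero _
      rw [lintegral_congr_ae h0]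
      simp
    have mp := (volume_preserving_piFinSuccAbove (fun _ : Fin (n+1) => ℝ) 0).symm
    have hZm : MeasurableSet {x : Fin (n+1) → ℝ | MvPolynomial.eval x p = 0} :=
      (isClosed_singleton.preimage (MvPolynomial.continuous_eval (p := p))).measurableSet
    rw [← mp.measure_preimage hZm.nullMeasurableSet]
    have hset : (MeasurableEquiv.piFinSuccAbove (fun _ : Fin (n+1) => ℝ) 0).symm ⁻¹'
        {x : Fin (n+1) → ℝ | MvPolynomial.eval x p = 0} = Prod.swap ⁻¹' E := by
      ext za
      simp only [Set.mem_preimage, Set.mem_setOf_eq, hE, Prod.snd_swap, Prod.fst_swap]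
      constructor <;> intro h <;> convert h using 2 <;>
        simp [MeasurableEquiv.piFinSuccAbove, Fin.insertNth_zero, Fin.consEquiv]
    rw [hset]
    have := (Measure.measurePreserving_swap (μ := (volume : Measure ℝ)) (ν := (volume : Measure (Fin n → ℝ)))).measure_preimage
      (hEm.nullMeasurableSet)
    rw [Measure.volume_eq_prod]
    rw [this]
    rw [← Measure.volume_eq_prod]
    exact key

noncomputable def Pfun (d m : ℕ) (W : (Fin d → Fin (m+1)) → ℝ) (u : EuclideanSpace ℝ (Fin d)) : ℝ :=
  ∑ s ∈ Finset.univ.filter (fun s : Fin d → Fin (m + 1) => (∑ i, (s i : ℕ)) ≤ m),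
    W s * ∏ i, (u i) ^ ((s i : ℕ))

lemma Pfun_null (d m : ℕ) (W : (Fin d → Fin (m+1)) → ℝ)
    (hW : ∃ s ∈ Finset.univ.filter (fun s : Fin d → Fin (m + 1) => (∑ i, (s i : ℕ)) ≤ m), W s ≠ 0) :
    volume {u : EuclideanSpace ℝ (Fin d) | Pfun d m W u = 0} = 0 := by
  classical
  set F := Finset.univ.filter (fun s : Fin d → Fin (m + 1) => (∑ i, (s i : ℕ)) ≤ m) with hF
  set p : MvPolynomial (Fin d) ℝ :=
    ∑ s ∈ F, MvPolynomial.monomial (Finsupp.equivFunOnFinite.symm (fun i => (s i : ℕ))) (W s) with hpdef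
  have heval : ∀ x : Fin d → ℝ, MvPolynomial.eval x p = ∑ s ∈ F, W s * ∏ i, (x i) ^ ((s i : ℕ)) := by
    intro x
    rw [hpdef, map_sum]
    refine Finset.sum_congr rfl fun s _ => ?_
    rw [MvPolynomial.eval_monomial]
    congr 1
    rw [Finsupp.prod_fintype]
    · simp
    · intro i; exact pow_zero _
  obtain ⟨s₀, hs₀F, hs₀⟩ := hW
  have hinj : Function.Injective
      (fun s : Fin d → Fin (m+1) => (Finsupp.equivFunOnFinite.symm (fun i => (s i : ℕ)))) := by
    intro s t hst
    have := Finsupp.equivFunOnFinite.symm.injective hst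
    funext i
    exact Fin.val_injective (congrFun this i)
  have hp : p ≠ 0 := by
    intro h
    apply hs₀
    have hc := congrArg (MvPolynomial.coeff (Finsupp.equivFunOnFinite.symm (fun i => (s₀ i : ℕ)))) h
    rw [hpdef] at hc
    simp only [MvPolynomial.coeff_sum, MvPolynomial.coeff_monomial, MvPolynomial.coeff_zero] at hc
    rwa [Finset.sum_eq_single_of_mem s₀ hs₀F (fun s _ hs => by
      rw [if_neg (fun hh => hs (hinj hh))]), if_pos rfl] at hc
  have h0 := mv_null d p hp
  have mp := EuclideanSpace.volume_preserving_symm_measurableEquiv_toLp (ι := Fin d)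
  have hmeas : MeasurableSet {x : Fin d → ℝ | MvPolynomial.eval x p = 0} :=
    (isClosed_singleton.preimage (MvPolynomial.continuous_eval (p := p))).measurableSet
  have hpre : (MeasurableEquiv.toLp 2 (Fin d → ℝ)).symm ⁻¹' {x : Fin d → ℝ | MvPolynomial.eval x p = 0}
      = {u : EuclideanSpace ℝ (Fin d) | Pfun d m W u = 0} := by
    ext u
    simp only [Set.mem_preimage, Set.mem_setOf_eq, heval]
    rfl
  rw [← hpre, mp.measure_preimage hmeas.nullMeasurableSet]
  exact h0

lemma adm_nonempty (d : ℕ) (hd : 0 < d) (c₀ : ℝ) (hc₀ : c₀ ∈ Set.Ioo (0:ℝ) 1) :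
    ∃ S : Set (EuclideanSpace ℝ (Fin d)), IsCompact S ∧ S ⊆ closedBall 0 1 ∧
      volume S = ENNReal.ofReal (c₀ *
        (volume (closedBall (0 : EuclideanSpace ℝ (Fin d)) 1)).toReal / 2 ^ d) := by
  have h2d : (0:ℝ) < 2 ^ d := by positivity
  have hx0 : (0:ℝ) < c₀ / 2 ^ d := div_pos hc₀.1 h2d
  set r : ℝ := (c₀ / 2 ^ d) ^ ((d:ℝ)⁻¹) with hr
  have hr0 : 0 < r := Real.rpow_pos_of_pos hx0 _
  have hr1 : r ≤ 1 := by
    apply Real.rpow_le_one hx0.le _ (by positivity)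
    rw [div_le_one h2d]
    exact hc₀.2.le.trans (one_le_pow₀ (by norm_num))
  have hpow : r ^ d = c₀ / 2 ^ d := by
    rw [hr, ← Real.rpow_natCast ((c₀ / 2 ^ d) ^ ((d:ℝ)⁻¹)) d, ← Real.rpow_mul hx0.le,
      inv_mul_cancel₀ (by exact_mod_cast hd.ne'), Real.rpow_one]
  refine ⟨closedBall 0 r, isCompact_closedBall _ _, closedBall_subset_closedBall hr1, ?_⟩
  have hvol := Measure.addHaar_closedBall' (volume : Measure (EuclideanSpace ℝ (Fin d))) 0 hr0.le
  rw [hvol, finrank_euclideanSpace_fin, hpow]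
  have hfin : volume (closedBall (0 : EuclideanSpace ℝ (Fin d)) 1) ≠ ⊤ :=
    (measure_closedBall_lt_top).ne
  rw [show c₀ * (volume (closedBall (0 : EuclideanSpace ℝ (Fin d)) 1)).toReal / 2 ^ d
      = (c₀ / 2 ^ d) * (volume (closedBall (0 : EuclideanSpace ℝ (Fin d)) 1)).toReal by ring,
    ENNReal.ofReal_mul hx0.le, ENNReal.ofReal_toReal hfin]

lemma Pfun_continuous (d m : ℕ) (W : (Fin d → Fin (m+1)) → ℝ) : Continuous (Pfun d m W) := by
  refine continuous_finset_sum _ fun s _ => ?_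
  refine continuous_const.mul (continuous_finset_prod _ fun i _ => ?_)
  exact ((continuous_apply i).comp (PiLp.continuous_ofLp 2 fun _ : Fin d => ℝ)).pow _

lemma coord_le (d : ℕ) (u : EuclideanSpace ℝ (Fin d)) (hu : u ∈ closedBall (0 : EuclideanSpace ℝ (Fin d)) 1)
    (i : Fin d) : |u i| ≤ 1 := by
  have h1 : ‖u‖ ≤ 1 := by simpa [mem_closedBall, dist_zero_right] using hu
  refine le_trans ?_ h1
  rw [EuclideanSpace.norm_eq]
  calc |u i| = Real.sqrt (‖u i‖ ^ 2) := by rw [Real.sqrt_sq_eq_abs]; simp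
  _ ≤ _ := by
      apply Real.sqrt_le_sqrt
      exact Finset.single_le_sum (f := fun j => ‖u j‖ ^ 2) (fun j _ => by positivity) (Finset.mem_univ i)

lemma Pfun_le (d m : ℕ) (W : (Fin d → Fin (m+1)) → ℝ) (u : EuclideanSpace ℝ (Fin d))
    (hu : u ∈ closedBall (0 : EuclideanSpace ℝ (Fin d)) 1) :
    |Pfun d m W u| ≤ ∑ s ∈ Finset.univ.filter
      (fun s : Fin d → Fin (m + 1) => (∑ i, (s i : ℕ)) ≤ m), |W s| := by
  refine (Finset.abs_sum_le_sum_abs _ _).trans ?_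
  refine Finset.sum_le_sum fun s _ => ?_
  rw [abs_mul]
  have : |∏ i, (u i) ^ ((s i : ℕ))| ≤ 1 := by
    rw [Finset.abs_prod]
    refine Finset.prod_le_one (fun i _ => abs_nonneg _) fun i _ => ?_
    rw [abs_pow]
    exact pow_le_one₀ (abs_nonneg _) (coord_le d u hu i)
  calc |W s| * |∏ i, (u i) ^ ((s i : ℕ))| ≤ |W s| * 1 :=
        mul_le_mul_of_nonneg_left this (abs_nonneg _)
  _ = |W s| := mul_one _

lemma Pfun_sub (d m : ℕ) (W V : (Fin d → Fin (m+1)) → ℝ) (u : EuclideanSpace ℝ (Fin d)) :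
    Pfun d m (W - V) u = Pfun d m W u - Pfun d m V u := by
  simp [Pfun, sub_mul, Finset.sum_sub_distrib]

lemma pointwise_lb (d m : ℕ) (cE : ℝ≥0∞) (hcE0 : 0 < cE) (hcEtop : cE ≠ ⊤)
    (W : (Fin d → Fin (m+1)) → ℝ)
    (hW : ∃ s ∈ Finset.univ.filter (fun s : Fin d → Fin (m + 1) => (∑ i, (s i : ℕ)) ≤ m), W s ≠ 0) :
    ∃ ε > 0, ∀ S : Set (EuclideanSpace ℝ (Fin d)), IsCompact S →
      S ⊆ closedBall 0 1 → volume S = cE →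
      ε ≤ ∫ u in S, (Pfun d m W u)^2 := by
  have hnull := Pfun_null d m W hW
  set B := closedBall (0 : EuclideanSpace ℝ (Fin d)) 1 with hB
  set A : ℕ → Set (EuclideanSpace ℝ (Fin d)) :=
    fun n => B ∩ (fun u => (Pfun d m W u)^2) ⁻¹' Set.Iio (1/(n+1) : ℝ) with hA
  have hAmeas : ∀ n, MeasurableSet (A n) := fun n =>
    (Metric.isClosed_closedBall).measurableSet.inter
      ((((Pfun_continuous d m W).pow 2).measurable) measurableSet_Iio)
  have hAanti : Antitone A := by
    intro a b hab
    refine Set.inter_subset_inter_right _ (Set.preimage_mono ?_)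
    intro x hx
    rw [Set.mem_Iio] at hx ⊢
    refine lt_of_lt_of_le hx ?_
    apply one_div_le_one_div_of_le (by positivity)
    exact_mod_cast Nat.succ_le_succ hab
  have hInter : ⋂ n, A n ⊆ {u | Pfun d m W u = 0} := by
    intro u hu
    have h1 : ∀ n : ℕ, (Pfun d m W u)^2 < 1/(n+1) := fun n => (Set.mem_iInter.1 hu n).2
    have h2 : (Pfun d m W u)^2 ≤ 0 := by
      by_contra h
      push_neg at h
      obtain ⟨n, hn⟩ := exists_nat_one_div_lt h
      exact absurd (h1 n) (not_lt.2 hn.le)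
    have := sq_nonneg (Pfun d m W u)
    have h3 : (Pfun d m W u)^2 = 0 := le_antisymm h2 this
    exact pow_eq_zero_iff (by norm_num) |>.1 h3
  have htend := tendsto_measure_iInter_atTop (μ := volume)
    (fun n => (hAmeas n).nullMeasurableSet) hAanti
    ⟨0, ((measure_mono Set.inter_subset_left).trans_lt measure_closedBall_lt_top).ne⟩
  have hzero : volume (⋂ n, A n) = 0 := measure_mono_null hInter hnull
  rw [hzero] at htend
  obtain ⟨n, hn⟩ : ∃ n : ℕ, volume (A n) < cE := by
    have := (htend.eventually_lt_const hcE0).exists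
    exact this
  set t : ℝ := 1/(n+1) with ht
  have ht0 : (0:ℝ) < t := by positivity
  set δ : ℝ := (cE - volume (A n)).toReal with hδ
  have hδ0 : 0 < δ := by
    apply ENNReal.toReal_pos
    · exact (tsub_pos_of_lt hn).ne'
    · exact (tsub_le_self.trans_lt hcEtop.lt_top).ne
  refine ⟨t * δ, by positivity, ?_⟩
  intro S hScomp hSsub hSvol
  have hSmeas : MeasurableSet S := hScomp.isClosed.measurableSet
  have hint : IntegrableOn (fun u => (Pfun d m W u)^2) S volume :=
    (((Pfun_continuous d m W).pow 2).continuousOn).integrableOn_compact hScomp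
  set S' := S \ A n with hS'
  have hS'meas : MeasurableSet S' := hSmeas.diff (hAmeas n)
  have hS'vol : cE - volume (A n) ≤ volume S' := by
    rw [tsub_le_iff_right]
    calc cE = volume S := hSvol.symm
    _ ≤ volume (S' ∪ A n) := measure_mono (fun x hx => by
        by_cases h : x ∈ A n
        · exact Or.inr h
        · exact Or.inl ⟨hx, h⟩)
    _ ≤ volume S' + volume (A n) := measure_union_le _ _
  have hS'fin : volume S' ≠ ⊤ := by
    refine ((measure_mono Set.diff_subset).trans_lt ?_).ne
    rw [hSvol]; exact hcEtop.lt_top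
  have hlow : ∀ u ∈ S', t ≤ (Pfun d m W u)^2 := by
    intro u hu
    have hB' : u ∈ B := hSsub hu.1
    have : u ∉ A n := hu.2
    rw [hA] at this
    simp only [Set.mem_inter_iff, Set.mem_preimage, Set.mem_Iio] at this
    push_neg at this
    exact this hB'
  calc t * δ ≤ t * (volume S').toReal := by
        apply mul_le_mul_of_nonneg_left _ ht0.le
        exact ENNReal.toReal_mono hS'fin hS'vol
  _ ≤ ∫ u in S', (Pfun d m W u)^2 :=
        setIntegral_ge_of_const_le_real hS'meas hS'fin hlow (hint.mono_set Set.diff_subset)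
  _ ≤ ∫ u in S, (Pfun d m W u)^2 := by
        apply setIntegral_mono_set hint
        · exact Filter.Eventually.of_forall (fun u => sq_nonneg _)
        · exact HasSubset.Subset.eventuallyLE Set.diff_subset

lemma key_lb (d m : ℕ) (cE : ℝ≥0∞) (hcE0 : 0 < cE) (hcEtop : cE ≠ ⊤)
    (hne : ∃ S : Set (EuclideanSpace ℝ (Fin d)), IsCompact S ∧ S ⊆ closedBall 0 1 ∧ volume S = cE) :
    ∃ ε > 0, ∀ (W : (Fin d → Fin (m+1)) → ℝ) (S : Set (EuclideanSpace ℝ (Fin d))),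
      (∑ s ∈ Finset.univ.filter (fun s : Fin d → Fin (m + 1) => (∑ i, (s i : ℕ)) ≤ m), W s ^ 2) = 1 →
      IsCompact S → S ⊆ closedBall 0 1 → volume S = cE →
      ε ≤ ∫ u in S, (Pfun d m W u)^2 := by
  classical
  set F := Finset.univ.filter (fun s : Fin d → Fin (m + 1) => (∑ i, (s i : ℕ)) ≤ m) with hF
  set Adm : Set (Set (EuclideanSpace ℝ (Fin d))) :=
    {S | IsCompact S ∧ S ⊆ closedBall 0 1 ∧ volume S = cE} with hAdm
  have hAdm_ne : Adm.Nonempty := hne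
  set val : ((Fin d → Fin (m+1)) → ℝ) → Set (EuclideanSpace ℝ (Fin d)) → ℝ :=
    fun W S => ∫ u in S, (Pfun d m W u)^2 with hval
  have hint : ∀ (W : (Fin d → Fin (m+1)) → ℝ) (S), IsCompact S →
      IntegrableOn (fun u => (Pfun d m W u)^2) S volume := fun W S hS =>
    (((Pfun_continuous d m W).pow 2).continuousOn).integrableOn_compact hS
  have hvpos : ∀ W, ∀ S ∈ Adm, 0 ≤ val W S := fun W S hS =>
    setIntegral_nonneg hS.1.isClosed.measurableSet fun x _ => sq_nonneg _
  set f : ((Fin d → Fin (m+1)) → ℝ) → ℝ := fun W => sInf (val W '' Adm) with hf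
  have hbdd : ∀ W, BddBelow (val W '' Adm) := fun W =>
    ⟨0, by rintro y ⟨S, hS, rfl⟩; exact hvpos W S hS⟩
  have himg_ne : ∀ W, (val W '' Adm).Nonempty := fun W => hAdm_ne.image _
  have hf_le : ∀ W, ∀ S ∈ Adm, f W ≤ val W S := fun W S hS => csInf_le (hbdd W) ⟨S, hS, rfl⟩
  have hf_ge : ∀ W (ε : ℝ), (∀ S ∈ Adm, ε ≤ val W S) → ε ≤ f W := fun W ε h =>
    le_csInf (himg_ne W) (by rintro y ⟨S, hS, rfl⟩; exact h S hS)
  set D : ((Fin d → Fin (m+1)) → ℝ) → ((Fin d → Fin (m+1)) → ℝ) → ℝ := fun W V =>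
    (∑ s ∈ F, |W s - V s|) * ((∑ s ∈ F, |W s|) + (∑ s ∈ F, |V s|)) * cE.toReal with hD
  have hDsymm : ∀ W V, D V W = D W V := by
    intro W V
    simp only [hD]
    rw [show (∑ s ∈ F, |V s - W s|) = ∑ s ∈ F, |W s - V s| from
      Finset.sum_congr rfl fun s _ => abs_sub_comm _ _]
    ring
  have hdiff : ∀ W V, ∀ S ∈ Adm, |val W S - val V S| ≤ D W V := by
    intro W V S hS
    obtain ⟨hSc, hSsub, hSvol⟩ := hS
    have heq : val W S - val V S = ∫ u in S, ((Pfun d m W u)^2 - (Pfun d m V u)^2) :=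
      (integral_sub (hint W S hSc) (hint V S hSc)).symm
    have hb : ∀ u ∈ S, ‖(Pfun d m W u)^2 - (Pfun d m V u)^2‖ ≤
        (∑ s ∈ F, |W s - V s|) * ((∑ s ∈ F, |W s|) + (∑ s ∈ F, |V s|)) := by
      intro u hu
      have hu' := hSsub hu
      have h1 : |Pfun d m W u - Pfun d m V u| ≤ ∑ s ∈ F, |W s - V s| := by
        rw [← Pfun_sub]
        simpa using Pfun_le d m (W - V) u hu'
      have h2 := Pfun_le d m W u hu'
      have h3 := Pfun_le d m V u hu'
      have hfact : (Pfun d m W u)^2 - (Pfun d m V u)^2 =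
          (Pfun d m W u - Pfun d m V u) * (Pfun d m W u + Pfun d m V u) := by ring
      rw [Real.norm_eq_abs, hfact, abs_mul]
      refine mul_le_mul h1 ((abs_add_le _ _).trans (add_le_add h2 h3)) (abs_nonneg _)
        (Finset.sum_nonneg fun s _ => abs_nonneg _)
    have hnorm := norm_setIntegral_le_of_norm_le_const (μ := volume) (s := S)
      (by rw [hSvol]; exact hcEtop.lt_top) hb
    rw [← heq, Real.norm_eq_abs, measureReal_def, hSvol] at hnorm
    exact hnorm
  have hf_diff : ∀ W V, |f W - f V| ≤ D W V := by
    intro W V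
    rw [abs_sub_le_iff]
    constructor
    · have h1 : ∀ S ∈ Adm, f W - D W V ≤ val V S := by
        intro S hS
        have := (abs_sub_le_iff.1 (hdiff W V S hS)).1
        have := hf_le W S hS
        linarith
      have := hf_ge V _ h1
      linarith
    · have h1 : ∀ S ∈ Adm, f V - D W V ≤ val W S := by
        intro S hS
        have h2 := (abs_sub_le_iff.1 (hdiff V W S hS)).1
        rw [hDsymm W V] at h2
        have := hf_le V S hS
        linarith
      have := hf_ge W _ h1
      linarith
  have hf_cont : Continuous f := by
    rw [continuous_iff_continuousAt]
    intro W₀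
    have hg : Continuous (fun V => D V W₀) := by
      refine Continuous.mul (Continuous.mul ?_ ?_) continuous_const
      · exact continuous_finset_sum _ fun s _ => ((continuous_apply s).sub continuous_const).abs
      · exact Continuous.add (continuous_finset_sum _ fun s _ => (continuous_apply s).abs)
          continuous_const
    have hgW₀ : D W₀ W₀ = 0 := by simp [hD]
    have hup : Filter.Tendsto (fun V => f W₀ + D V W₀) (nhds W₀) (nhds (f W₀ + D W₀ W₀)) :=
      ((continuous_const.add hg).tendsto W₀)
    rw [hgW₀, add_zero] at hup
    have hlo : Filter.Tendsto (fun V => f W₀ - D V W₀) (nhds W₀) (nhds (f W₀ - D W₀ W₀)) :=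
      ((continuous_const.sub hg).tendsto W₀)
    rw [hgW₀, sub_zero] at hlo
    refine tendsto_of_tendsto_of_tendsto_of_le_of_le hlo hup ?_ ?_
    · intro V
      have := (abs_sub_le_iff.1 (hf_diff V W₀)).2
      simp only; linarith
    · intro V
      have := (abs_sub_le_iff.1 (hf_diff V W₀)).1
      simp only; linarith
  set T : Set ((Fin d → Fin (m+1)) → ℝ) :=
    {W | (∑ s ∈ F, W s ^ 2) = 1 ∧ ∀ s, s ∉ F → W s = 0} with hT
  have hTclosed : IsClosed T := by
    have hT2 : T = {W : (Fin d → Fin (m+1)) → ℝ | (∑ s ∈ F, W s ^ 2) = 1} ∩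
        ⋂ s, ⋂ (_ : s ∉ F), {W : (Fin d → Fin (m+1)) → ℝ | W s = 0} := by
      ext W; simp [hT, Set.mem_iInter]
    rw [hT2]
    refine IsClosed.inter ?_ ?_
    · exact isClosed_eq (continuous_finset_sum _ fun s _ => (continuous_apply s).pow 2)
        continuous_const
    · exact isClosed_iInter fun s => isClosed_iInter fun _ =>
        isClosed_eq (continuous_apply s) continuous_const
  have hTsub : T ⊆ closedBall 0 1 := by
    intro W hW
    rw [mem_closedBall_zero_iff]
    refine (pi_norm_le_iff_of_nonneg zero_le_one).2 fun s => ?_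
    by_cases hs : s ∈ F
    · have h1 : W s ^ 2 ≤ 1 := by
        rw [← hW.1]
        exact Finset.single_le_sum (f := fun s => W s ^ 2) (fun t _ => sq_nonneg _) hs
      rw [Real.norm_eq_abs]
      exact (sq_le_one_iff_abs_le_one (W s)).1 h1
    · rw [hW.2 s hs]; simp
  have hTcomp : IsCompact T := (isCompact_closedBall (0 : (Fin d → Fin (m+1)) → ℝ) 1).of_isClosed_subset hTclosed hTsub
  have h0F : (fun _ => (0 : Fin (m+1))) ∈ F := by simp [hF]
  set W₀ : (Fin d → Fin (m+1)) → ℝ := fun s => if s = (fun _ => 0) then 1 else 0 with hW₀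
  have hW₀T : W₀ ∈ T := by
    constructor
    · have hc : ∀ s ∈ F, W₀ s ^ 2 = if s = (fun _ => (0 : Fin (m+1))) then (fun _ => (1:ℝ)) s else 0 := fun s _ => by
        by_cases h : s = (fun _ => (0 : Fin (m+1))) <;> simp [hW₀, h]
      rw [Finset.sum_congr rfl hc, Finset.sum_ite_eq' F _ (fun _ => (1:ℝ)), if_pos h0F]
    · intro s hs
      have hne : s ≠ (fun _ => (0 : Fin (m+1))) := fun h => hs (h ▸ h0F)
      simp [hW₀, hne]
  obtain ⟨Wm, hWmT, hWmmin'⟩ := hTcomp.exists_isMinOn ⟨W₀, hW₀T⟩ hf_cont.continuousOn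
  have hWmmin : ∀ V ∈ T, f Wm ≤ f V := fun V hV => hWmmin' hV
  have hWm_ne : ∃ s ∈ F, Wm s ≠ 0 := by
    by_contra h
    push_neg at h
    have hz : (∑ s ∈ F, Wm s ^ 2) = 0 := Finset.sum_eq_zero fun s hs => by rw [h s hs]; ring
    rw [hWmT.1] at hz; norm_num at hz
  obtain ⟨ε₀, hε₀, hε₀lb⟩ := pointwise_lb d m cE hcE0 hcEtop Wm hWm_ne
  have hfWm : ε₀ ≤ f Wm := hf_ge Wm ε₀ (fun S hS => hε₀lb S hS.1 hS.2.1 hS.2.2)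
  refine ⟨f Wm, lt_of_lt_of_le hε₀ hfWm, ?_⟩
  intro W S hWsum hSc hSsub hSvol
  set W' : (Fin d → Fin (m+1)) → ℝ := fun s => if s ∈ F then W s else 0 with hW'
  have hPeq : Pfun d m W' = Pfun d m W := by
    funext u
    simp only [Pfun]
    refine Finset.sum_congr rfl fun s hs => ?_
    have hsF : s ∈ F := by rw [hF]; exact hs
    rw [show W' s = W s by rw [hW']; simp only; rw [if_pos hsF]]
  have hW'T : W' ∈ T := by
    constructor
    · calc (∑ s ∈ F, W' s ^ 2) = ∑ s ∈ F, W s ^ 2 :=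
            Finset.sum_congr rfl fun s hs => by rw [hW']; simp only; rw [if_pos hs]
      _ = 1 := hWsum
    · intro s hs; simp [hW', hs]
  have h1 : f Wm ≤ f W' := hWmmin W' hW'T
  have h2 : f W' ≤ val W' S := hf_le W' S ⟨hSc, hSsub, hSvol⟩
  have h3 : val W' S = ∫ u in S, (Pfun d m W u)^2 := by rw [hval]; simp only; rw [hPeq]
  rw [← h3]
  linarith

lemma W0_sum (d m : ℕ) : (∑ s ∈ Finset.univ.filter
    (fun s : Fin d → Fin (m + 1) => (∑ i, (s i : ℕ)) ≤ m),
    ((fun s : Fin d → Fin (m+1) => if s = (fun _ => (0 : Fin (m+1))) then (1:ℝ) else 0) s) ^ 2) = 1 := by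
  classical
  have h0F : (fun _ => (0 : Fin (m+1))) ∈ Finset.univ.filter
      (fun s : Fin d → Fin (m + 1) => (∑ i, (s i : ℕ)) ≤ m) := by simp
  have hc : ∀ s ∈ Finset.univ.filter
      (fun s : Fin d → Fin (m + 1) => (∑ i, (s i : ℕ)) ≤ m),
      ((fun s : Fin d → Fin (m+1) => if s = (fun _ => (0 : Fin (m+1))) then (1:ℝ) else 0) s) ^ 2
      = if s = (fun _ => (0 : Fin (m+1))) then (fun _ => (1:ℝ)) s else 0 := fun s _ => by
    by_cases h : s = (fun _ => (0 : Fin (m+1))) <;> simp [h]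
  rw [Finset.sum_congr rfl hc, Finset.sum_ite_eq' _ _ (fun _ => (1:ℝ)), if_pos h0F]


/-- Positivity of the eigenvalue constant `λ₀`: with multi-indices `s` of degree
`|s| ≤ m` (where `m = ⌊β⌋*`), the quantity
`λ₀ = (1/4) μ_min · inf { ∫_S (∑_{|s|≤m} W_s u^s)² du }` — infimum over unit vectors `W`
and compact sets `S ⊆ B(0,1)` of Lebesgue measure exactly `c₀ v_d / 2^d` — is strictly
positive. -/
theorem lambda_zero_pos (d m : ℕ) (hd : 0 < d) (c₀ μmin : ℝ)
    (hc₀ : c₀ ∈ Set.Ioo (0 : ℝ) 1) (hμmin : 0 < μmin) :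
    0 < (1 / 4) * μmin * sInf {y : ℝ |
      ∃ W : (Fin d → Fin (m + 1)) → ℝ, ∃ S : Set (EuclideanSpace ℝ (Fin d)),
        (∑ s ∈ Finset.univ.filter (fun s : Fin d → Fin (m + 1) => (∑ i, (s i : ℕ)) ≤ m),
          (W s) ^ 2) = 1 ∧
        IsCompact S ∧ S ⊆ closedBall 0 1 ∧
        volume S = ENNReal.ofReal (c₀ *
          (volume (closedBall (0 : EuclideanSpace ℝ (Fin d)) 1)).toReal / 2 ^ d) ∧
        y = ∫ u in S,
          (∑ s ∈ Finset.univ.filter (fun s : Fin d → Fin (m + 1) => (∑ i, (s i : ℕ)) ≤ m),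
            W s * ∏ i, (u i) ^ ((s i : ℕ))) ^ 2} := by
  have h2d : (0:ℝ) < 2 ^ d := by positivity
  set cE := ENNReal.ofReal (c₀ *
    (volume (closedBall (0 : EuclideanSpace ℝ (Fin d)) 1)).toReal / 2 ^ d) with hcE
  have hvol0 : volume (closedBall (0 : EuclideanSpace ℝ (Fin d)) 1) ≠ 0 :=
    (measure_closedBall_pos volume 0 one_pos).ne'
  have hvoltop : volume (closedBall (0 : EuclideanSpace ℝ (Fin d)) 1) ≠ ⊤ :=
    measure_closedBall_lt_top.ne
  have htR : 0 < (volume (closedBall (0 : EuclideanSpace ℝ (Fin d)) 1)).toReal :=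
    ENNReal.toReal_pos hvol0 hvoltop
  have hcE0 : 0 < cE := by
    rw [hcE]
    apply ENNReal.ofReal_pos.2
    have := hc₀.1
    positivity
  have hcEtop : cE ≠ ⊤ := ENNReal.ofReal_ne_top
  obtain ⟨ε, hε, hkey⟩ := key_lb d m cE hcE0 hcEtop (adm_nonempty d hd c₀ hc₀)
  obtain ⟨S₀, hS₀c, hS₀sub, hS₀vol⟩ := adm_nonempty d hd c₀ hc₀
  set A := {y : ℝ |
      ∃ W : (Fin d → Fin (m + 1)) → ℝ, ∃ S : Set (EuclideanSpace ℝ (Fin d)),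
        (∑ s ∈ Finset.univ.filter (fun s : Fin d → Fin (m + 1) => (∑ i, (s i : ℕ)) ≤ m),
          (W s) ^ 2) = 1 ∧
        IsCompact S ∧ S ⊆ closedBall 0 1 ∧
        volume S = cE ∧
        y = ∫ u in S,
          (∑ s ∈ Finset.univ.filter (fun s : Fin d → Fin (m + 1) => (∑ i, (s i : ℕ)) ≤ m),
            W s * ∏ i, (u i) ^ ((s i : ℕ))) ^ 2} with hA
  have hAne : A.Nonempty := by
    refine ⟨_, (fun s : Fin d → Fin (m+1) => if s = (fun _ => (0 : Fin (m+1))) then (1:ℝ) else 0),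
      S₀, W0_sum d m, hS₀c, hS₀sub, hS₀vol, rfl⟩
  have hlb : ε ≤ sInf A := by
    apply le_csInf hAne
    rintro y ⟨W, S, h1, h2, h3, h4, rfl⟩
    simpa [Pfun] using hkey W S h1 h2 h3 h4
  have hsInf : 0 < sInf A := lt_of_lt_of_le hε hlb
  have : (0:ℝ) < (1/4) * μmin := by positivity
  exact mul_pos this hsInf
end
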